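/- arXiv:1809.09479 — 2 statements merged into one kernel-verified Lean document; each statement's English description precedes it below -/
import Mathlib

section
/- Let G be a group, H ≤ G, and λ an ordinal. Then C_{E_λ(H)}^{α}(H) = Z_α(E_λ(H)) for all ordinals α ≤ λ, where E_λ(H) is the transfinite envelope and Z_α denotes the transfinite upper central series. -/
open Ordinal

section Defs
variable {G : Type*} [Group G]

attribute [local instance] Classical.propDecidable

/-- The commutator `[x,y] = x⁻¹y⁻¹xy` as in the paper. -/
def pcomm (x y : G) : G := x⁻¹ * y⁻¹ * x * y

/-- Transfinite upper central series of the (sub)set `E` of `G`, viewed inside `G`. -/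
noncomputable def ZSet (E : Set G) (α : Ordinal) : Set G :=
  if α = 0 then {1}
  else if hs : ∃ β < α, α = β + 1 then
    {x | x ∈ E ∧ ∀ g ∈ E, pcomm x g ∈ ZSet E hs.choose}
  else ⋃ (β : Ordinal) (_ : β < α), ZSet E β
termination_by α
decreasing_by all_goals first | assumption | exact hs.choose_spec.1

/-- Transfinite iterated centralizers `C_E^α(H)` of `H` inside the ambient set `E ⊆ G`. -/
noncomputable def CIter (E H : Set G) (α : Ordinal) : Set G :=
  if α = 0 then {1}
  else if hs : ∃ β < α, α = β + 1 then
    {x | x ∈ E ∧ (∀ β < α, ∀ a : G, a ∈ CIter E H β ↔ x * a * x⁻¹ ∈ CIter E H β)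
       ∧ ∀ h ∈ H, pcomm x h ∈ CIter E H hs.choose}
  else ⋃ (β : Ordinal) (_ : β < α), CIter E H β
termination_by α
decreasing_by all_goals first | assumption | exact hs.choose_spec.1

/-- Transfinite envelopes `E_α(H)` of `H ⊆ G`. -/
noncomputable def Env (H : Set G) (α : Ordinal) : Set G :=
  if α = 0 then Set.univ
  else if hs : ∃ β < α, α = β + 1 then
    {g | g ∈ Env H hs.choose ∧
      ∀ c ∈ CIter (Env H hs.choose) H (hs.choose + 1),
        pcomm g c ∈ CIter (Env H hs.choose) H hs.choose}
  else ⋂ (β : Ordinal) (_ : β < α), Env H β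
termination_by α
decreasing_by all_goals first | assumption | exact hs.choose_spec.1

end Defs

/-!
Two facts about a group `E ⊇ H` drive an induction on `λ`. If `[E, C_E^{δ+1}(H)] ≤ C_E^δ(H)` for
all `δ < α`, then `C_E^β(H) = Z_β(E)` for `β ≤ α`: the commutator condition gives
`C^{β+1} ⊆ Z_{β+1}`, and conversely the normalizer condition in `C^{β+1}` is automatic because
`C^δ = Z_δ` is normal in `E`. And if `E' ≤ E` contains `H` and normalizes every `C_E^δ(H)`,
`δ < α`, then `C_{E'}^α(H) = C_E^α(H) ∩ E'`. For `δ < λ` the group `E_λ(H) ≤ E_δ(H)` normalizes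
`C_{E_δ}^δ(H) = Z_δ(E_δ(H))` by induction, so the second fact turns the defining property of
`E_{δ+1}(H)` into the hypothesis of the first for `E = E_λ(H)`.
-/

open Order

@[elab_as_elim]
theorem Ordinal.strong_limit_induction {motive : Ordinal → Prop} (o : Ordinal) (zero : motive 0)
    (add_one : ∀ o, (∀ o' ≤ o, motive o') → motive (o + 1))
    (limit : ∀ o, IsSuccLimit o → (∀ o' < o, motive o') → motive o) : motive o := by
  induction o using WellFoundedLT.induction with
  | _ o IH =>
    rcases zero_or_succ_or_isSuccLimit o with rfl | ⟨o, rfl⟩ | ho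
    · exact zero
    · rw [succ_eq_add_one]
      exact add_one o fun o' ho' => IH o' (lt_add_one_iff.2 ho')
    · exact limit o ho IH

section Unfold

variable {G : Type*} [Group G] (E H : Set G)

private lemma add_one_ne_zero' (β : Ordinal) : β + 1 ≠ 0 := (add_pos_of_right zero_lt_one β).ne'

private lemma exists_add_one_eq (β : Ordinal) : ∃ γ < β + 1, β + 1 = γ + 1 :=
  ⟨β, lt_add_one β, rfl⟩

private lemma exists_add_one_eq_choose (β : Ordinal) : (exists_add_one_eq β).choose = β :=
  (add_one_inj.1 (exists_add_one_eq β).choose_spec.2).symm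

private lemma not_exists_add_one_eq {o : Ordinal} (ho : IsSuccLimit o) : ¬∃ β < o, o = β + 1 := by
  rintro ⟨β, -, rfl⟩
  exact ho.succ_ne β (succ_eq_add_one β)

lemma zSet_zero : ZSet E 0 = {1} := by
  rw [ZSet, if_pos rfl]

lemma zSet_add_one (β : Ordinal) :
    ZSet E (β + 1) = {x | x ∈ E ∧ ∀ g ∈ E, pcomm x g ∈ ZSet E β} := by
  rw [ZSet, if_neg (add_one_ne_zero' β), dif_pos (exists_add_one_eq β), exists_add_one_eq_choose]

lemma zSet_limit {o : Ordinal} (ho : IsSuccLimit o) : ZSet E o = ⋃ β < o, ZSet E β := by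
  rw [ZSet, if_neg ho.pos.ne', dif_neg (not_exists_add_one_eq ho)]

lemma cIter_zero : CIter E H 0 = {1} := by
  rw [CIter, if_pos rfl]

lemma cIter_add_one (β : Ordinal) :
    CIter E H (β + 1) = {x | x ∈ E ∧ (∀ δ ≤ β, x ∈ Subgroup.normalizer (CIter E H δ)) ∧
      ∀ h ∈ H, pcomm x h ∈ CIter E H β} := by
  rw [CIter, if_neg (add_one_ne_zero' β), dif_pos (exists_add_one_eq β), exists_add_one_eq_choose]
  simp only [lt_add_one_iff, Subgroup.mem_set_normalizer_iff]

lemma cIter_limit {o : Ordinal} (ho : IsSuccLimit o) : CIter E H o = ⋃ β < o, CIter E H β := by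
  rw [CIter, if_neg ho.pos.ne', dif_neg (not_exists_add_one_eq ho)]

lemma env_zero : Env H 0 = Set.univ := by
  rw [Env, if_pos rfl]

lemma env_add_one (β : Ordinal) :
    Env H (β + 1) = {g | g ∈ Env H β ∧
      ∀ c ∈ CIter (Env H β) H (β + 1), pcomm g c ∈ CIter (Env H β) H β} := by
  rw [Env, if_neg (add_one_ne_zero' β), dif_pos (exists_add_one_eq β), exists_add_one_eq_choose]

lemma env_limit {o : Ordinal} (ho : IsSuccLimit o) : Env H o = ⋂ β < o, Env H β := by
  rw [Env, if_neg ho.pos.ne', dif_neg (not_exists_add_one_eq ho)]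

end Unfold

section Pcomm

variable {G : Type*} [Group G]

lemma pcomm_one_left (y : G) : pcomm 1 y = 1 := by simp [pcomm]

lemma inv_pcomm (x y : G) : (pcomm x y)⁻¹ = pcomm y x := by simp [pcomm, mul_assoc]

lemma pcomm_mul_left (x y z : G) : pcomm (x * y) z = y⁻¹ * pcomm x z * y * pcomm y z := by
  simp only [pcomm]; group

lemma pcomm_inv_left (x z : G) : pcomm x⁻¹ z = (x * pcomm x z * x⁻¹)⁻¹ := by
  simp only [pcomm]; group

lemma pcomm_conj_left (g a e : G) : pcomm (g * a * g⁻¹) e = g * pcomm a (g⁻¹ * e * g) * g⁻¹ := by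
  simp only [pcomm]; group

lemma pcomm_eq_inv_mul_conj (x g : G) : pcomm x g = x⁻¹ * (g⁻¹ * x * g) := by
  simp only [pcomm, mul_assoc]

end Pcomm

section SubgroupSet

variable {G : Type*} [Group G]

structure IsSubgroupSet (S : Set G) : Prop where
  one_mem : (1 : G) ∈ S
  mul_mem {a b : G} : a ∈ S → b ∈ S → a * b ∈ S
  inv_mem {a : G} : a ∈ S → a⁻¹ ∈ S

lemma isSubgroupSet_univ : IsSubgroupSet (Set.univ : Set G) :=
  ⟨trivial, fun _ _ => trivial, fun _ => trivial⟩

lemma isSubgroupSet_singleton_one : IsSubgroupSet ({1} : Set G) :=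
  ⟨rfl, by rintro _ _ rfl rfl; exact mul_one 1, by rintro _ rfl; exact inv_one⟩

lemma isSubgroupSet_iInter₂ {ι : Sort*} {p : ι → Prop} {S : ∀ i, p i → Set G}
    (hS : ∀ i hi, IsSubgroupSet (S i hi)) : IsSubgroupSet (⋂ i, ⋂ hi, S i hi) := by
  refine ⟨?_, fun ha hb => ?_, fun ha => ?_⟩ <;> simp only [Set.mem_iInter] at * <;> intro i hi
  · exact (hS i hi).one_mem
  · exact (hS i hi).mul_mem (ha i hi) (hb i hi)
  · exact (hS i hi).inv_mem (ha i hi)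

namespace IsSubgroupSet

variable {S : Set G} (hS : IsSubgroupSet S)
include hS

lemma subset_normalizer : S ⊆ Subgroup.normalizer S := fun g hg a =>
  ⟨fun ha => hS.mul_mem (hS.mul_mem hg ha) (hS.inv_mem hg), fun ha => by
    simpa [mul_assoc] using hS.mul_mem (hS.mul_mem (hS.inv_mem hg) ha) hg⟩

lemma pcomm_mem {a b : G} (ha : a ∈ S) (hb : b ∈ S) : pcomm a b ∈ S :=
  hS.mul_mem (hS.mul_mem (hS.mul_mem (hS.inv_mem ha) (hS.inv_mem hb)) ha) hb

lemma pcomm_mem_comm {a b : G} (h : pcomm a b ∈ S) : pcomm b a ∈ S :=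
  inv_pcomm a b ▸ hS.inv_mem h

lemma pcomm_mul_mem {x y c : G} (hy : y ∈ Subgroup.normalizer S) (hx : pcomm x c ∈ S)
    (hyc : pcomm y c ∈ S) : pcomm (x * y) c ∈ S := by
  rw [pcomm_mul_left]
  exact hS.mul_mem ((Subgroup.mem_set_normalizer_iff''.1 hy _).1 hx) hyc

lemma pcomm_inv_mem {x c : G} (hx : x ∈ Subgroup.normalizer S) (hxc : pcomm x c ∈ S) :
    pcomm x⁻¹ c ∈ S := by
  rw [pcomm_inv_left]
  exact hS.inv_mem ((hx _).1 hxc)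

end IsSubgroupSet

lemma subset_normalizer_of_conj_mem {E S : Set G} (hE : IsSubgroupSet E)
    (h : ∀ g ∈ E, ∀ a ∈ S, g * a * g⁻¹ ∈ S) : E ⊆ Subgroup.normalizer S := fun g hg a =>
  ⟨h g hg a, fun ha => by simpa [mul_assoc] using h g⁻¹ (hE.inv_mem hg) _ ha⟩

lemma Subgroup.mem_normalizer_inter {S T : Set G} {g : G}
    (hS : g ∈ normalizer S) (hT : g ∈ normalizer T) : g ∈ normalizer (S ∩ T) := fun a =>
  and_congr (hS a) (hT a)

end SubgroupSet

section ZSet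

variable {G : Type*} [Group G] {E : Set G}

lemma zSet_subset (hE : (1 : G) ∈ E) (α : Ordinal) : ZSet E α ⊆ E := by
  induction α using Ordinal.limitRecOn with
  | zero => rw [zSet_zero]; exact Set.singleton_subset_iff.2 hE
  | add_one β _ => rw [zSet_add_one]; exact fun x hx => hx.1
  | limit o ho IH =>
    rw [zSet_limit E ho]
    exact Set.iUnion₂_subset IH

lemma subset_normalizer_zSet (hE : IsSubgroupSet E) (α : Ordinal) :
    E ⊆ Subgroup.normalizer (ZSet E α) := by
  refine subset_normalizer_of_conj_mem hE ?_
  induction α using Ordinal.limitRecOn with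
  | zero =>
    rw [zSet_zero]
    rintro g - _ rfl
    simp
  | add_one β IH =>
    rw [zSet_add_one]
    rintro g hg a ⟨haE, ha⟩
    refine ⟨hE.mul_mem (hE.mul_mem hg haE) (hE.inv_mem hg), fun e he => ?_⟩
    rw [pcomm_conj_left]
    exact IH g hg _ (ha _ (hE.mul_mem (hE.mul_mem (hE.inv_mem hg) he) hg))
  | limit o ho IH =>
    rw [zSet_limit E ho]
    simp only [Set.mem_iUnion]
    rintro g hg a ⟨β, hβ, ha⟩
    exact ⟨β, hβ, IH β hβ g hg a ha⟩

lemma zSet_subset_zSet_add_one (hE : IsSubgroupSet E) {β : Ordinal}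
    (hβ : IsSubgroupSet (ZSet E β)) : ZSet E β ⊆ ZSet E (β + 1) := by
  intro x hx
  rw [zSet_add_one]
  refine ⟨zSet_subset hE.one_mem β hx, fun g hg => ?_⟩
  rw [pcomm_eq_inv_mul_conj]
  exact hβ.mul_mem (hβ.inv_mem hx)
    ((Subgroup.mem_set_normalizer_iff''.1 (subset_normalizer_zSet hE β hg) x).1 hx)

/-- The subgroup property at a limit stage needs the chain to be increasing below it. -/
lemma isSubgroupSet_zSet_and_monotone (hE : IsSubgroupSet E) (α : Ordinal) :
    IsSubgroupSet (ZSet E α) ∧ ∀ β ≤ α, ZSet E β ⊆ ZSet E α := by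
  induction α using Ordinal.strong_limit_induction with
  | zero =>
    refine ⟨zSet_zero E ▸ isSubgroupSet_singleton_one, fun β hβ => ?_⟩
    rw [nonpos_iff_eq_zero.1 hβ]
  | add_one o IH =>
    obtain ⟨hZ, hmono⟩ := IH o le_rfl
    have hN := subset_normalizer_zSet hE o
    refine ⟨?_, fun β hβ => ?_⟩
    · rw [zSet_add_one]
      refine ⟨⟨hE.one_mem, fun g _ => (pcomm_one_left g).symm ▸ hZ.one_mem⟩, ?_, ?_⟩
      · rintro x y ⟨hxE, hx⟩ ⟨hyE, hy⟩
        exact ⟨hE.mul_mem hxE hyE, fun g hg => hZ.pcomm_mul_mem (hN hyE) (hx g hg) (hy g hg)⟩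
      · rintro x ⟨hxE, hx⟩
        exact ⟨hE.inv_mem hxE, fun g hg => hZ.pcomm_inv_mem (hN hxE) (hx g hg)⟩
    · rcases hβ.lt_or_eq with hβ | rfl
      · exact (hmono β (lt_add_one_iff.1 hβ)).trans (zSet_subset_zSet_add_one hE hZ)
      · exact le_rfl
  | limit o ho IH =>
    have hmono : ∀ β ≤ o, ZSet E β ⊆ ZSet E o := fun β hβ => by
      rcases hβ.lt_or_eq with hβ | rfl
      · rw [zSet_limit E ho]; exact Set.subset_iUnion₂ (s := fun β _ => ZSet E β) β hβ
      · exact le_rfl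
    refine ⟨?_, hmono⟩
    rw [zSet_limit E ho]
    refine ⟨Set.mem_iUnion₂.2 ⟨0, ho.pos, by rw [zSet_zero]; rfl⟩, ?_, ?_⟩ <;>
      simp only [Set.mem_iUnion]
    · rintro x y ⟨β, hβ, hx⟩ ⟨γ, hγ, hy⟩
      have hmax := max_lt hβ hγ
      exact ⟨max β γ, hmax, (IH _ hmax).1.mul_mem ((IH _ hmax).2 β (le_max_left β γ) hx)
        ((IH _ hmax).2 γ (le_max_right β γ) hy)⟩
    · rintro x ⟨β, hβ, hx⟩
      exact ⟨β, hβ, (IH β hβ).1.inv_mem hx⟩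

lemma isSubgroupSet_zSet (hE : IsSubgroupSet E) (α : Ordinal) : IsSubgroupSet (ZSet E α) :=
  (isSubgroupSet_zSet_and_monotone hE α).1

end ZSet

section CIter

variable {G : Type*} [Group G] {E H : Set G}

/-- An element of `E'` normalizing every `C_E^δ(H)` also normalizes `C_E^δ(H) ∩ E'`, so the
normalizer conditions in the two recursions hold automatically and only the commutator conditions
have to be compared. -/
lemma cIter_eq_inter_of_subset {E' : Set G} (hE' : IsSubgroupSet E') (hE'E : E' ⊆ E)
    (hH : H ⊆ E') (α : Ordinal) (hN : ∀ δ < α, E' ⊆ Subgroup.normalizer (CIter E H δ)) :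
    CIter E' H α = CIter E H α ∩ E' := by
  induction α using Ordinal.strong_limit_induction with
  | zero =>
    rw [cIter_zero, cIter_zero, Set.singleton_inter_of_mem hE'.one_mem]
  | add_one o IH =>
    have hN' : ∀ δ ≤ o, E' ⊆ Subgroup.normalizer (CIter E H δ) := fun δ hδ =>
      hN δ (lt_add_one_iff.2 hδ)
    ext x
    simp only [cIter_add_one, Set.mem_inter_iff, Set.mem_ofPred_eq]
    constructor
    · rintro ⟨hxE', -, hx⟩
      refine ⟨⟨hE'E hxE', fun δ hδ => hN' δ hδ hxE', fun h hh => ?_⟩, hxE'⟩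
      rw [IH o le_rfl fun δ hδ => hN' δ hδ.le] at hx
      exact (hx h hh).1
    · rintro ⟨⟨-, -, hx⟩, hxE'⟩
      refine ⟨hxE', fun δ hδ => ?_, fun h hh => ?_⟩
      · rw [IH δ hδ fun δ' hδ' => hN' δ' (hδ'.le.trans hδ)]
        exact Subgroup.mem_normalizer_inter (hN' δ hδ hxE') (hE'.subset_normalizer hxE')
      · rw [IH o le_rfl fun δ hδ => hN' δ hδ.le]
        exact ⟨hx h hh, hE'.pcomm_mem hxE' (hH hh)⟩
  | limit o ho IH =>
    rw [cIter_limit _ _ ho, cIter_limit _ _ ho, Set.iUnion₂_inter]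
    exact Set.iUnion₂_congr fun β hβ => IH β hβ fun δ hδ => hN δ (hδ.trans hβ)

lemma cIter_eq_zSet_of_pcomm_mem (hE : IsSubgroupSet E) (hH : H ⊆ E) {α : Ordinal}
    (hcomm : ∀ δ < α, ∀ c ∈ CIter E H (δ + 1), ∀ g ∈ E, pcomm g c ∈ CIter E H δ) :
    ∀ β ≤ α, CIter E H β = ZSet E β := by
  intro β
  induction β using Ordinal.strong_limit_induction with
  | zero => intro; rw [cIter_zero, zSet_zero]
  | add_one o IH =>
    intro ho
    have ho' : o < α := add_one_le_iff.1 ho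
    have IH' : ∀ δ ≤ o, CIter E H δ = ZSet E δ := fun δ hδ => IH δ hδ (hδ.trans ho'.le)
    ext x
    rw [zSet_add_one]
    constructor
    · intro hx
      refine ⟨(cIter_add_one E H o ▸ hx).1, fun g hg => ?_⟩
      rw [← IH' o le_rfl]
      exact (IH' o le_rfl ▸ isSubgroupSet_zSet hE o).pcomm_mem_comm (hcomm o ho' x hx g hg)
    · rintro ⟨hxE, hx⟩
      rw [cIter_add_one]
      refine ⟨hxE, fun δ hδ => ?_, fun h hh => IH' o le_rfl ▸ hx h (hH hh)⟩
      rw [IH' δ hδ]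
      exact subset_normalizer_zSet hE δ hxE
  | limit o ho IH =>
    intro hoα
    rw [cIter_limit _ _ ho, zSet_limit _ ho]
    exact Set.iUnion₂_congr fun β hβ => IH β hβ (hβ.le.trans hoα)

end CIter

section Env

variable {G : Type*} [Group G] {H : Set G}

lemma env_antitone (H : Set G) : Antitone (Env H) := by
  intro γ lam hγ
  induction lam using Ordinal.strong_limit_induction with
  | zero => rw [nonpos_iff_eq_zero.1 hγ]
  | add_one o IH =>
    rcases hγ.lt_or_eq with hγ | rfl
    · rw [env_add_one]
      exact fun x hx => IH o le_rfl (lt_add_one_iff.1 hγ) hx.1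
    · exact le_rfl
  | limit o ho IH =>
    rcases hγ.lt_or_eq with hγ | rfl
    · rw [env_limit H ho]
      exact Set.iInter₂_subset (s := fun β _ => Env H β) γ hγ
    · exact le_rfl

structure EnvInvariant (H : Set G) (γ : Ordinal) : Prop where
  isSubgroupSet : IsSubgroupSet (Env H γ)
  subset : H ⊆ Env H γ
  cIter_eq_zSet : ∀ α ≤ γ, CIter (Env H γ) H α = ZSet (Env H γ) α

namespace EnvInvariant

variable {γ : Ordinal} (hγ : EnvInvariant H γ)
include hγ

lemma subset_normalizer {δ : Ordinal} (hδ : δ ≤ γ) :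
    Env H γ ⊆ Subgroup.normalizer (CIter (Env H γ) H δ) :=
  hγ.cIter_eq_zSet δ hδ ▸ subset_normalizer_zSet hγ.isSubgroupSet δ

lemma isSubgroupSet_cIter : IsSubgroupSet (CIter (Env H γ) H γ) :=
  hγ.cIter_eq_zSet γ le_rfl ▸ isSubgroupSet_zSet hγ.isSubgroupSet γ

lemma cIter_env_eq_inter {lam : Ordinal} (hlam : γ ≤ lam)
    (hsub : IsSubgroupSet (Env H lam)) (hH : H ⊆ Env H lam) {α : Ordinal} (hα : α ≤ γ + 1) :
    CIter (Env H lam) H α = CIter (Env H γ) H α ∩ Env H lam :=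
  cIter_eq_inter_of_subset hsub (env_antitone H hlam) hH α fun _ hδ _ hx =>
    hγ.subset_normalizer (lt_add_one_iff.1 (hδ.trans_le hα)) (env_antitone H hlam hx)

lemma isSubgroupSet_env_add_one : IsSubgroupSet (Env H (γ + 1)) := by
  have hS := hγ.isSubgroupSet_cIter
  have hN := hγ.subset_normalizer le_rfl
  rw [env_add_one]
  refine ⟨⟨hγ.isSubgroupSet.one_mem, fun c _ => (pcomm_one_left c).symm ▸ hS.one_mem⟩, ?_, ?_⟩
  · rintro a b ⟨haE, ha⟩ ⟨hbE, hb⟩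
    exact ⟨hγ.isSubgroupSet.mul_mem haE hbE,
      fun c hc => hS.pcomm_mul_mem (hN hbE) (ha c hc) (hb c hc)⟩
  · rintro a ⟨haE, ha⟩
    exact ⟨hγ.isSubgroupSet.inv_mem haE, fun c hc => hS.pcomm_inv_mem (hN haE) (ha c hc)⟩

lemma subset_env_add_one : H ⊆ Env H (γ + 1) := by
  intro h hh
  rw [env_add_one]
  refine ⟨hγ.subset hh, fun c hc => hγ.isSubgroupSet_cIter.pcomm_mem_comm ?_⟩
  rw [cIter_add_one] at hc
  exact hc.2.2 h hh

end EnvInvariant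

lemma isSubgroupSet_env {lam : Ordinal} (hlt : ∀ γ < lam, EnvInvariant H γ) :
    IsSubgroupSet (Env H lam) := by
  rcases zero_or_succ_or_isSuccLimit lam with rfl | ⟨γ, rfl⟩ | hlam
  · exact env_zero H ▸ isSubgroupSet_univ
  · rw [succ_eq_add_one] at hlt ⊢
    exact (hlt γ (lt_add_one γ)).isSubgroupSet_env_add_one
  · exact env_limit H hlam ▸ isSubgroupSet_iInter₂ fun γ hγ => (hlt γ hγ).isSubgroupSet

lemma subset_env {lam : Ordinal} (hlt : ∀ γ < lam, EnvInvariant H γ) : H ⊆ Env H lam := by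
  rcases zero_or_succ_or_isSuccLimit lam with rfl | ⟨γ, rfl⟩ | hlam
  · exact env_zero H ▸ Set.subset_univ H
  · rw [succ_eq_add_one] at hlt ⊢
    exact (hlt γ (lt_add_one γ)).subset_env_add_one
  · exact env_limit H hlam ▸ Set.subset_iInter₂ fun γ hγ => (hlt γ hγ).subset

lemma pcomm_mem_cIter_env {lam δ : Ordinal} (hlt : ∀ γ < lam, EnvInvariant H γ) (hδ : δ < lam)
    {c g : G} (hc : c ∈ CIter (Env H lam) H (δ + 1)) (hg : g ∈ Env H lam) :
    pcomm g c ∈ CIter (Env H lam) H δ := by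
  have hsub := isSubgroupSet_env hlt
  have hH := subset_env hlt
  rw [(hlt δ hδ).cIter_env_eq_inter hδ.le hsub hH le_rfl] at hc
  have hg' := env_antitone H (add_one_le_of_lt hδ) hg
  rw [env_add_one] at hg'
  rw [(hlt δ hδ).cIter_env_eq_inter hδ.le hsub hH (lt_add_one δ).le]
  exact ⟨hg'.2 c hc.1, hsub.pcomm_mem hg hc.2⟩

lemma envInvariant (H : Set G) (lam : Ordinal) : EnvInvariant H lam := by
  induction lam using WellFoundedLT.induction with
  | _ lam IH =>
    have hsub := isSubgroupSet_env IH
    have hH := subset_env IH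
    exact ⟨hsub, hH, cIter_eq_zSet_of_pcomm_mem hsub hH fun δ hδ c hc g hg =>
      pcomm_mem_cIter_env IH hδ hc hg⟩

end Env

theorem stmt9 {G : Type*} [Group G] (H : Subgroup G) (lam : Ordinal) :
    ∀ α ≤ lam, CIter (Env (H : Set G) lam) (H : Set G) α = ZSet (Env (H : Set G) lam) α :=
  (envInvariant (H : Set G) lam).cIter_eq_zSet
end

section
/- Every hypercentral group is locally nilpotent: if G is a group with Z_α(G) = G for some ordinal α, then every finitely generated subgroup of G is nilpotent. -/
/-!
For `x ≠ 1` in a hypercentral group, the least `γ` with `x ∈ Z_γ(G)` is a successor `δ + 1`, and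
every commutator `[x, g]` lies in `Z_δ(G)`, so commutators strictly lower this height. In a group
generated by a finite set `X`, replacing a finite set `S` by its commutators with `X` strictly
lowers the maximal height, while the normal closure of the new set still contains the commutator
of the normal closure of `S` with the whole group. By well-foundedness of the ordinals, finitely
many steps reach `{1}`, and with them the lower central series reaches `⊥`.
-/

open Ordinal

section Defs
variable {G : Type*} [Group G]

attribute [local instance] Classical.propDecidable

end Defs

open Subgroup
open scoped commutatorElement

section Commutator
variable {H : Type*} [Group H]

lemma pcomm_one_left_s16 (g : H) : pcomm 1 g = 1 := by
  simp [pcomm]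

lemma pcomm_eq_one_iff_commute {x y : H} : pcomm x y = 1 ↔ Commute x y := by
  have hxy : pcomm x y = ⁅x⁻¹, y⁻¹⁆ := by simp [pcomm, commutatorElement_def]
  rw [hxy, commutatorElement_eq_one_iff_commute, Commute.inv_inv_iff]

lemma map_pcomm {K : Type*} [Group K] (φ : H →* K) (x y : H) :
    φ (pcomm x y) = pcomm (φ x) (φ y) := by
  simp [pcomm]

lemma commutator_normalClosure_le_normalClosure_image2_pcomm {X : Set H}
    (hX : closure X = ⊤) (S : Set H) :
    ⁅normalClosure S, ⊤⁆ ≤ normalClosure (Set.image2 pcomm S X) := by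
  set R := normalClosure (Set.image2 pcomm S X)
  let π := QuotientGroup.mk' R
  have hcenter : center (H ⧸ R) = centralizer (π '' X) := by
    rw [← centralizer_univ, ← coe_top, ← map_top_of_surjective π (QuotientGroup.mk'_surjective R),
      ← hX, MonoidHom.map_closure, centralizer_closure]
  have hS : S ⊆ comap π (center (H ⧸ R)) := by
    intro s hs
    rw [SetLike.mem_coe, mem_comap, hcenter]
    rintro _ ⟨x, hx, rfl⟩
    have hsx : π (pcomm s x) = 1 :=
      (QuotientGroup.eq_one_iff _).mpr (subset_normalClosure (Set.mem_image2_of_mem hs hx))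
    rw [map_pcomm, pcomm_eq_one_iff_commute] at hsx
    exact hsx.eq.symm
  have hC := normalClosure_le_normal hS
  rw [← Subgroup.upperCentralSeriesStep_eq_comap_center] at hC
  rw [commutator_le]
  intro g hg y _
  exact (Subgroup.mem_upperCentralSeriesStep R g).mp (hC hg) y

end Commutator

section Height
variable {H ι : Type*} [Group H] [LinearOrder ι] [OrderBot ι]

lemma eq_one_of_apply_eq_bot {f : H → ι} (hf : ∀ a b, a ≠ 1 → f (pcomm a b) < f a) {a : H}
    (ha : f a = ⊥) : a = 1 := by
  by_contra h
  exact not_lt_bot (ha ▸ hf a 1 h)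

lemma sup_image₂_pcomm_lt [DecidableEq H] {f : H → ι} (h1 : f 1 = ⊥)
    (hf : ∀ a b, a ≠ 1 → f (pcomm a b) < f a) (S X : Finset H) (hS : S.sup f ≠ ⊥) :
    (S.image₂ pcomm X).sup f < S.sup f := by
  rw [Finset.sup_lt_iff (bot_lt_iff_ne_bot.mpr hS)]
  simp only [Finset.mem_image₂]
  rintro _ ⟨a, ha, x, -, rfl⟩
  rcases eq_or_ne a 1 with rfl | ha1
  · rw [pcomm_one_left_s16, h1]
    exact bot_lt_iff_ne_bot.mpr hS
  · exact (hf a x ha1).trans_le (Finset.le_sup ha)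

theorem Group.isNilpotent_of_pcomm_lt [Group.FG H] [WellFoundedLT ι] (f : H → ι) (h1 : f 1 = ⊥)
    (hf : ∀ a b, a ≠ 1 → f (pcomm a b) < f a) : Group.IsNilpotent H := by
  classical
  obtain ⟨X, hX⟩ := Group.FG.out (G := H)
  suffices ∀ μ : ι, ∀ S : Finset H, S.sup f = μ → ∀ n,
      (⊤ : Subgroup H).lowerCentralSeries n ≤ normalClosure S →
      ∃ m, (⊤ : Subgroup H).lowerCentralSeries m = ⊥ from
    Subgroup.nilpotent_iff_lowerCentralSeries.mpr <| this _ X rfl 0 <| by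
      rw [Subgroup.lowerCentralSeries_zero, ← hX]
      exact closure_le_normalClosure
  intro μ
  induction μ using WellFoundedLT.induction with
  | _ μ ih =>
  rintro S rfl n hn
  by_cases hS : S.sup f = ⊥
  · refine ⟨n, le_bot_iff.mp (hn.trans (normalClosure_le_normal fun a ha => ?_))⟩
    exact eq_one_of_apply_eq_bot hf (le_bot_iff.mp (hS ▸ Finset.le_sup ha))
  · refine ih _ (sup_image₂_pcomm_lt h1 hf S X hS) _ rfl (n + 1) ?_
    rw [Subgroup.lowerCentralSeries_succ, Finset.coe_image₂]
    exact (commutator_mono hn le_rfl).trans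
      (commutator_normalClosure_le_normalClosure_image2_pcomm hX _)

end Height

section UpperCentralSeries
universe u v
variable {G : Type u} [Group G]

lemma ZSet_zero (E : Set G) : ZSet E 0 = {1} := by
  rw [ZSet, if_pos rfl]

lemma ZSet_add_one (E : Set G) (β : Ordinal) :
    ZSet E (β + 1) = {x | x ∈ E ∧ ∀ g ∈ E, pcomm x g ∈ ZSet E β} := by
  have hs : ∃ γ < β + 1, β + 1 = γ + 1 := ⟨β, lt_add_one β, rfl⟩
  have hβ : hs.choose = β :=
    Order.succ_injective (by simpa only [← Order.succ_eq_add_one] using hs.choose_spec.2.symm)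
  rw [ZSet, if_neg (add_pos_of_right zero_lt_one β).ne', dif_pos hs, hβ]

lemma ZSet_of_isSuccLimit (E : Set G) {α : Ordinal} (hα : Order.IsSuccLimit α) :
    ZSet E α = ⋃ (β : Ordinal) (_ : β < α), ZSet E β := by
  have hs : ¬ ∃ β < α, α = β + 1 := by
    rintro ⟨β, -, rfl⟩
    exact Order.not_isSuccLimit_succ β (Order.succ_eq_add_one β ▸ hα)
  rw [ZSet, if_neg (show α ≠ 0 from hα.ne_bot), dif_neg hs]

/-- The least `α` with `x ∈ Z_α(G)`; it is `0` when `x` lies in no term of the series. -/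
noncomputable def zHeight (x : G) : Ordinal.{v} :=
  sInf {α | x ∈ ZSet (Set.univ : Set G) α}

lemma zHeight_le {x : G} {α : Ordinal} (hx : x ∈ ZSet Set.univ α) : zHeight x ≤ α :=
  csInf_le' hx

lemma zHeight_one : zHeight (1 : G) = 0 :=
  nonpos_iff_eq_zero.mp (zHeight_le (by rw [ZSet_zero]; rfl))

lemma pcomm_zHeight_lt {x : G} (hx : ∃ α : Ordinal.{v}, x ∈ ZSet Set.univ α) (hx1 : x ≠ 1)
    (g : G) : zHeight (pcomm x g) < (zHeight x : Ordinal.{v}) := by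
  have hmem : x ∈ ZSet Set.univ (zHeight x) := csInf_mem hx
  rcases Ordinal.zero_or_succ_or_isSuccLimit (zHeight x) with h0 | ⟨δ, hδ⟩ | hlim
  · rw [h0, ZSet_zero] at hmem
    exact absurd hmem hx1
  · rw [← hδ, Order.succ_eq_add_one] at hmem ⊢
    rw [ZSet_add_one] at hmem
    exact (zHeight_le (hmem.2 g trivial)).trans_lt (lt_add_one δ)
  · rw [ZSet_of_isSuccLimit _ hlim, Set.mem_iUnion₂] at hmem
    obtain ⟨β, hβ, hxβ⟩ := hmem
    exact absurd (zHeight_le hxβ) hβ.not_ge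

end UpperCentralSeries

/-- every hypercentral group is locally nilpotent. -/
theorem stmt16 {G : Type*} [Group G] (α : Ordinal)
    (h : ZSet (Set.univ : Set G) α = Set.univ) :
    ∀ K : Subgroup G, K.FG → Group.IsNilpotent K := by
  intro K hK
  have : Group.FG K := (Group.fg_iff_subgroup_fg K).mpr hK
  have hmem (x : G) : ∃ β, x ∈ ZSet Set.univ β := ⟨α, h.symm ▸ Set.mem_univ x⟩
  exact Group.isNilpotent_of_pcomm_lt (fun k : K => zHeight (k : G)) zHeight_one
    fun a b ha => pcomm_zHeight_lt (hmem a) (by simpa using ha) (b : G)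
end
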